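/- arXiv:0906.2998 — 3 statements merged into one kernel-verified Lean document; each statement's English description precedes it below -/
import Mathlib

section
/- There exists a constant C such that for all ε ∈ (0,1], sup_{y∈ℝⁿ} ∫_K |y − x(x₀)|^k e^{−a|y − x(x₀)|²/ε} dx₀ ≤ C ε^{(k+1)/2}. -/
/-!
Near a point `p ∈ K` choose a functional `φ` with `‖φ‖ ≤ 1` such that `u = φ ∘ x` has nonzero
differential `L` at `p`. Since `|φ y - u q| ≤ ‖y - x q‖`, the integrand is at most `ε^{k/2}` times
the Gaussian `exp (-(a / 2ε) (u q - φ y)²)`. The map `Φ q = q + (u q - L q) v` (with `L v = 1`)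
is a local diffeomorphism with `L ∘ Φ = u`, so by the change of variables formula the sets
`{l ≤ u ≤ r}` near `p` have volume `O(r - l)`: the push-forward of Lebesgue measure under `u` has
bounded density. The Gaussian then integrates to `O(√ε)`, and compactness of `K` finishes.
-/

noncomputable section

open MeasureTheory Set

abbrev Eu (n : ℕ) := EuclideanSpace ℝ (Fin n)

open Filter Topology Module Metric Real
open scoped ENNReal NNReal RealInnerProductSpace

theorem MeasureTheory.Measure.le_smul_volume_of_forall_Icc_le {ν : Measure ℝ} {c : ℝ≥0}
    (h : ∀ l r, ν (Icc l r) ≤ c * ENNReal.ofReal (r - l)) : ν ≤ (c : ℝ≥0∞) • volume := by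
  -- `c • volume` is the outer measure induced by the lengths `c * (r - l)` of intervals `Ioc l r`
  rw [Real.volume_eq_stieltjes_id, ← ENNReal.smul_def, ← StieltjesFunction.measure_smul]
  refine Measure.le_iff'.2 fun s ↦ ?_
  rw [StieltjesFunction.measure]
  show ν s ≤ (c • StieltjesFunction.id).outer s
  refine (OuterMeasure.le_ofFunction.2 fun t ↦ ?_ : ν.toOuterMeasure ≤ _) s
  rw [StieltjesFunction.length_eq]
  refine le_iInf₂ fun l r ↦ le_iInf fun hlr ↦ ?_
  have hbot : botSet (R := ℝ) = ∅ := eq_empty_of_forall_notMem fun x hx ↦ not_isBot x hx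
  rw [hbot, sdiff_empty] at hlr
  calc ν t ≤ ν (Icc l r) := measure_mono (hlr.trans Ioc_subset_Icc_self)
    _ ≤ c * ENNReal.ofReal (r - l) := h l r
    _ = _ := by
        rw [ENNReal.ofReal_coe_nnreal.symm, ← ENNReal.ofReal_mul c.coe_nonneg, mul_sub]; rfl

theorem MeasureTheory.lintegral_comp_le_of_measure_preimage_Icc_le {α : Type*} [MeasurableSpace α]
    {μ : Measure α} {u : α → ℝ} (hu : AEMeasurable u μ) {c : ℝ≥0}
    (h : ∀ l r, μ (u ⁻¹' Icc l r) ≤ c * ENNReal.ofReal (r - l)) {g : ℝ → ℝ≥0∞}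
    (hg : Measurable g) : ∫⁻ a, g (u a) ∂μ ≤ c * ∫⁻ t, g t := by
  have hmap : μ.map u ≤ (c : ℝ≥0∞) • volume :=
    Measure.le_smul_volume_of_forall_Icc_le fun l r ↦ by
      rw [Measure.map_apply_of_aemeasurable hu measurableSet_Icc]; exact h l r
  calc ∫⁻ a, g (u a) ∂μ = ∫⁻ t, g t ∂μ.map u := (lintegral_map' hg.aemeasurable hu).symm
    _ ≤ ∫⁻ t, g t ∂((c : ℝ≥0∞) • volume) := lintegral_mono' hmap le_rfl
    _ = c * ∫⁻ t, g t := lintegral_smul_measure _ _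

theorem lintegral_ofReal_exp_neg_mul_sub_sq {b : ℝ} (hb : 0 < b) (m : ℝ) :
    ∫⁻ t, ENNReal.ofReal (exp (-b * (t - m) ^ 2)) = ENNReal.ofReal √(π / b) := by
  rw [lintegral_sub_right_eq_self (fun t ↦ ENNReal.ofReal (exp (-b * t ^ 2))) m,
    ← ofReal_integral_eq_lintegral_ofReal (integrable_exp_neg_mul_sq hb)
      (ae_of_all _ fun _ ↦ (exp_pos _).le), integral_gaussian]

theorem MeasureTheory.lintegral_exp_neg_mul_sub_sq_comp_le {α : Type*} [MeasurableSpace α]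
    {μ : Measure α} {u : α → ℝ} (hu : AEMeasurable u μ) {c : ℝ≥0}
    (h : ∀ l r, μ (u ⁻¹' Icc l r) ≤ c * ENNReal.ofReal (r - l)) {b : ℝ} (hb : 0 < b) (m : ℝ) :
    ∫⁻ a, ENNReal.ofReal (exp (-b * (u a - m) ^ 2)) ∂μ ≤ c * ENNReal.ofReal √(π / b) := by
  rw [← lintegral_ofReal_exp_neg_mul_sub_sq hb m]
  exact lintegral_comp_le_of_measure_preimage_Icc_le hu h (by fun_prop)

theorem pow_mul_exp_neg_mul_sq_le {c : ℝ} (hc : 0 < c) (k : ℕ) {t : ℝ} (ht : 0 ≤ t) :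
    t ^ k * exp (-c * t ^ 2) ≤ exp (k ^ 2 / (4 * c)) := by
  have hpow : t ^ k ≤ exp (k * t) := by
    rw [exp_nat_mul]
    exact pow_le_pow_left₀ ht ((le_add_of_nonneg_right zero_le_one).trans (add_one_le_exp t)) k
  calc t ^ k * exp (-c * t ^ 2) ≤ exp (k * t) * exp (-c * t ^ 2) := by gcongr
    _ = exp (k * t - c * t ^ 2) := by rw [← exp_add]; ring_nf
    _ ≤ exp (k ^ 2 / (4 * c)) := by
        rw [exp_le_exp, le_div_iff₀ (by positivity)]
        nlinarith [sq_nonneg (2 * c * t - k)]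

theorem pow_mul_exp_le_of_abs_le {a ε s t : ℝ} (ha : 0 < a) (hε : 0 < ε) (hst : |s| ≤ t) (k : ℕ) :
    t ^ k * exp (-a * t ^ 2 / ε) ≤
      exp (k ^ 2 / (2 * a)) * √ε ^ k * exp (-(a / (2 * ε)) * s ^ 2) := by
  have hsε : 0 < √ε := sqrt_pos.2 hε
  set τ := t / √ε
  have hτ : t = √ε * τ := (mul_div_cancel₀ t hsε.ne').symm
  have hsplit : exp (-a * t ^ 2 / ε) = exp (-(a / 2) * τ ^ 2) * exp (-(a / (2 * ε)) * t ^ 2) := by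
    rw [← exp_add, hτ, mul_pow, sq_sqrt hε.le]
    congr 1
    field_simp
    ring
  have hts : -(a / (2 * ε)) * t ^ 2 ≤ -(a / (2 * ε)) * s ^ 2 := by
    have : s ^ 2 ≤ t ^ 2 := by rw [← sq_abs]; exact pow_le_pow_left₀ (abs_nonneg s) hst 2
    have : 0 ≤ a / (2 * ε) := by positivity
    nlinarith
  have hτk :=
    pow_mul_exp_neg_mul_sq_le (half_pos ha) k (div_nonneg ((abs_nonneg s).trans hst) hsε.le)
  rw [show 4 * (a / 2) = 2 * a by ring] at hτk
  calc t ^ k * exp (-a * t ^ 2 / ε)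
      = √ε ^ k * (τ ^ k * exp (-(a / 2) * τ ^ 2)) * exp (-(a / (2 * ε)) * t ^ 2) := by
        rw [hsplit, hτ, mul_pow]; ring
    _ ≤ √ε ^ k * exp (k ^ 2 / (2 * a)) * exp (-(a / (2 * ε)) * s ^ 2) := by
        gcongr
    _ = _ := by ring

theorem sqrt_pow_mul_sqrt {ε : ℝ} (hε : 0 ≤ ε) (k : ℕ) :
    √ε ^ k * √ε = ε ^ (((k : ℝ) + 1) / 2) := by
  rw [← pow_succ, sqrt_eq_rpow, ← rpow_natCast, ← rpow_mul hε]
  push_cast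
  ring_nf

theorem ContinuousLinearMap.exists_norm_le_one_comp_ne_zero {E F : Type*} [NormedAddCommGroup E]
    [NormedSpace ℝ E] [NormedAddCommGroup F] [NormedSpace ℝ F] {T : E →L[ℝ] F} (hT : T ≠ 0) :
    ∃ φ : StrongDual ℝ F, ‖φ‖ ≤ 1 ∧ φ.comp T ≠ 0 := by
  obtain ⟨h, hh⟩ := DFunLike.ne_iff.1 hT
  obtain ⟨φ, hφ, hφh⟩ := exists_dual_vector'' ℝ (T h)
  refine ⟨φ, hφ, DFunLike.ne_iff.2 ⟨h, ?_⟩⟩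
  simpa [hφh] using hh

theorem ContDiffAt.exists_straightening {E : Type*} [NormedAddCommGroup E] [NormedSpace ℝ E]
    {u : E → ℝ} {p : E} (hu : ContDiffAt ℝ 1 u p) (hp : fderiv ℝ u p ≠ 0) :
    ∃ Φ : E → E, ContDiffAt ℝ 1 Φ p ∧
      fderiv ℝ Φ p = ContinuousLinearMap.id ℝ E ∧ ∀ q, fderiv ℝ u p (Φ q) = u q := by
  set L := fderiv ℝ u p
  obtain ⟨v, hv⟩ : ∃ v, L v = 1 := by
    obtain ⟨h, hh⟩ := DFunLike.ne_iff.1 hp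
    exact ⟨(L h)⁻¹ • h, by rw [map_smul, smul_eq_mul, inv_mul_cancel₀ hh]⟩
  refine ⟨fun q ↦ q + (u q - L q) • v,
    contDiffAt_id.add ((hu.sub L.contDiff.contDiffAt).smul contDiffAt_const), ?_,
    fun q ↦ by simp [hv]⟩
  have hΦ' : HasFDerivAt (fun q ↦ q + (u q - L q) • v)
      (ContinuousLinearMap.id ℝ E + (fderiv ℝ u p - L).smulRight v) p :=
    (hasFDerivAt_id p).add
      (((hu.differentiableAt one_ne_zero).hasFDerivAt.sub L.hasFDerivAt).smul_const v)
  rw [hΦ'.fderiv]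
  ext
  simp [L]

section ChangeOfVariables

variable {E : Type*} [NormedAddCommGroup E] [NormedSpace ℝ E] [FiniteDimensional ℝ E]
  [MeasurableSpace E] [BorelSpace E]

theorem ofReal_mul_addHaar_le_addHaar_image (μ : Measure E) [μ.IsAddHaarMeasure] {s : Set E}
    {f : E → E} {f' : E → E →L[ℝ] E} (hs : MeasurableSet s)
    (hf' : ∀ x ∈ s, HasFDerivWithinAt f (f' x) s x) (hf : InjOn f s) {δ : ℝ}
    (hδ : ∀ x ∈ s, δ ≤ |(f' x).det|) : ENNReal.ofReal δ * μ s ≤ μ (f '' s) := by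
  rw [← lintegral_abs_det_fderiv_eq_addHaar_image μ hs hf' hf, ← setLIntegral_const]
  exact setLIntegral_mono' hs fun x hx ↦ ENNReal.ofReal_le_ofReal (hδ x hx)

theorem ContDiffAt.exists_closedBall_addHaar_le_two_mul_image (μ : Measure E)
    [μ.IsAddHaarMeasure] {Φ : E → E} {p : E} (hΦ : ContDiffAt ℝ 1 Φ p)
    (hΦp : fderiv ℝ Φ p = ContinuousLinearMap.id ℝ E) :
    ∃ ρ > 0, ∀ s ⊆ closedBall p ρ, MeasurableSet s → μ s ≤ 2 * μ (Φ '' s) := by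
  have hstrict : HasStrictFDerivAt Φ ((ContinuousLinearEquiv.refl ℝ E : E →L[ℝ] E)) p := by
    rw [ContinuousLinearEquiv.coe_refl, ← hΦp]
    exact hΦ.hasStrictFDerivAt one_ne_zero
  set F := hstrict.toOpenPartialHomeomorph Φ
  have hdet : Tendsto (fun q ↦ |(fderiv ℝ Φ q).det|) (𝓝 p) (𝓝 1) := by
    have := (continuous_abs.comp ContinuousLinearMap.continuous_det).continuousAt.tendsto.comp
      (hΦ.continuousAt_fderiv one_ne_zero)
    simpa [hΦp, Function.comp_def, ContinuousLinearMap.det] using this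
  obtain ⟨ρ, hρ, hgood⟩ := nhds_basis_closedBall.eventually_iff.1 <|
    (show ∀ᶠ q in 𝓝 p, q ∈ F.source from
      F.open_source.mem_nhds hstrict.mem_toOpenPartialHomeomorph_source).and <|
    (hΦ.eventually (by simp)).and (hdet.eventually_const_lt (by norm_num : (2⁻¹ : ℝ) < 1))
  refine ⟨ρ, hρ, fun s hsρ hs ↦ ?_⟩
  have hhalf : ENNReal.ofReal 2⁻¹ * μ s ≤ μ (Φ '' s) :=
    ofReal_mul_addHaar_le_addHaar_image μ hs
      (fun q hq ↦ ((hgood (hsρ hq)).2.1.differentiableAt one_ne_zero).hasFDerivAt.hasFDerivWithinAt)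
      (hstrict.toOpenPartialHomeomorph_coe ▸ F.injOn.mono fun q hq ↦ (hgood (hsρ hq)).1)
      (fun q hq ↦ (hgood (hsρ hq)).2.2.le)
  calc μ s = ENNReal.ofReal 2 * (ENNReal.ofReal 2⁻¹ * μ s) := by
        rw [← mul_assoc, ← ENNReal.ofReal_mul zero_le_two]; norm_num
    _ ≤ 2 * μ (Φ '' s) := by rw [ENNReal.ofReal_ofNat]; exact mul_le_mul_right hhalf _

end ChangeOfVariables

section InnerProductSpace

variable {E : Type*} [NormedAddCommGroup E] [InnerProductSpace ℝ E] [FiniteDimensional ℝ E]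
  [MeasurableSpace E] [BorelSpace E]

theorem OrthonormalBasis.volume_inner_preimage_Icc_inter_ball_le {ι : Type*} [Fintype ι]
    [DecidableEq ι] (b : OrthonormalBasis ι ℝ E) (i₀ : ι) (z₀ : E) (R l r : ℝ) :
    volume ((fun z ↦ ⟪b i₀, z⟫) ⁻¹' Icc l r ∩ ball z₀ R) ≤
      ENNReal.ofReal (r - l) * ENNReal.ofReal (2 * R) ^ (Fintype.card ι - 1) := by
  let ψ : E → (ι → ℝ) := fun z ↦ WithLp.ofLp (b.repr z)
  have hψ : MeasurePreserving ψ := (PiLp.volume_preserving_ofLp ι).comp b.measurePreserving_repr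
  let I : ι → Set ℝ := Function.update (fun i ↦ Ioo (ψ z₀ i - R) (ψ z₀ i + R)) i₀ (Icc l r)
  have hI : ∀ i, MeasurableSet (I i) := fun i ↦ by
    rcases eq_or_ne i i₀ with rfl | hi
    · simp only [I, Function.update_self, measurableSet_Icc]
    · simp only [I, Function.update_of_ne hi, measurableSet_Ioo]
  have hsub : (fun z ↦ ⟪b i₀, z⟫) ⁻¹' Icc l r ∩ ball z₀ R ⊆ ψ ⁻¹' univ.pi I := by
    rintro z ⟨hzi₀, hz⟩ i -
    rcases eq_or_ne i i₀ with rfl | hi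
    · simpa only [I, Function.update_self, ψ, b.repr_apply_apply, mem_preimage] using hzi₀
    · have hdist : |⟪b i, z - z₀⟫| < R :=
        calc |⟪b i, z - z₀⟫| ≤ ‖b i‖ * ‖z - z₀‖ := abs_real_inner_le_norm _ _
          _ < R := by rw [b.orthonormal.1 i, one_mul, ← dist_eq_norm]; exact hz
      rw [inner_sub_right, abs_sub_lt_iff] at hdist
      simp only [I, Function.update_of_ne hi, ψ, b.repr_apply_apply, mem_Ioo]
      constructor <;> linarith
  have hIi : ∀ i ∈ Finset.univ.erase i₀, volume (I i) = ENNReal.ofReal (2 * R) := fun i hi ↦ by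
    simp only [I, Function.update_of_ne (Finset.ne_of_mem_erase hi), Real.volume_Ioo]
    ring_nf
  calc volume ((fun z ↦ ⟪b i₀, z⟫) ⁻¹' Icc l r ∩ ball z₀ R) ≤ volume (ψ ⁻¹' univ.pi I) :=
        measure_mono hsub
    _ = ∏ i, volume (I i) := by
        rw [hψ.measure_preimage (MeasurableSet.univ_pi hI).nullMeasurableSet, volume_pi_pi]
    _ = ENNReal.ofReal (r - l) * ENNReal.ofReal (2 * R) ^ (Fintype.card ι - 1) := by
        rw [← Finset.mul_prod_erase _ _ (Finset.mem_univ i₀), Finset.prod_congr rfl hIi,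
          Finset.prod_const, Finset.card_erase_of_mem (Finset.mem_univ _), Finset.card_univ]
        simp only [I, Function.update_self, Real.volume_Icc]

theorem volume_preimage_Icc_inter_ball_le {L : StrongDual ℝ E} (hL : L ≠ 0) (z₀ : E)
    {R : ℝ} (hR : 0 ≤ R) (l r : ℝ) : volume (L ⁻¹' Icc l r ∩ ball z₀ R) ≤
      ENNReal.ofReal ((2 * R) ^ (finrank ℝ E - 1) / ‖L‖) * ENNReal.ofReal (r - l) := by
  classical
  have hL₀ : 0 < ‖L‖ := norm_pos_iff.2 hL
  set e : E := ‖L‖⁻¹ • (InnerProductSpace.toDual ℝ E).symm L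
  have he : ‖e‖ = 1 := by
    simp only [e, norm_smul, LinearIsometryEquiv.norm_map, norm_inv, norm_norm,
      inv_mul_cancel₀ hL₀.ne']
  have he_orth : Orthonormal ℝ ((↑) : ({e} : Set E) → E) := by
    rw [orthonormal_iff_ite]
    rintro ⟨_, rfl⟩ ⟨_, rfl⟩
    simp [he]
  obtain ⟨u, b, heu, hb⟩ := he_orth.exists_orthonormalBasis_extension
  let i₀ : u := ⟨e, heu rfl⟩
  have hslab : L ⁻¹' Icc l r = (fun z ↦ ⟪b i₀, z⟫) ⁻¹' Icc (l / ‖L‖) (r / ‖L‖) := by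
    ext z
    have hLe : L z = ‖L‖ * ⟪e, z⟫ := by
      simp only [e, real_inner_smul_left, InnerProductSpace.toDual_symm_apply,
        mul_inv_cancel_left₀ hL₀.ne']
    simp only [mem_preimage, mem_Icc, hLe, hb, i₀, div_le_iff₀ hL₀, le_div_iff₀ hL₀, mul_comm]
  rw [hslab, finrank_eq_card_basis b.toBasis]
  refine (b.volume_inner_preimage_Icc_inter_ball_le i₀ z₀ R _ _).trans_eq ?_
  rw [← ENNReal.ofReal_pow (by positivity), mul_comm, ← ENNReal.ofReal_mul (by positivity),
    ← ENNReal.ofReal_mul (by positivity), ← sub_div]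
  congr 1
  ring

theorem exists_volume_closedBall_inter_preimage_Icc_le {u : E → ℝ} {p : E}
    (hu : ContDiffAt ℝ 1 u p) (hp : fderiv ℝ u p ≠ 0) :
    ∃ ρ > 0, ContinuousOn u (closedBall p ρ) ∧ ∃ c : ℝ≥0, ∀ l r,
      volume (closedBall p ρ ∩ u ⁻¹' Icc l r) ≤ c * ENNReal.ofReal (r - l) := by
  obtain ⟨Φ, hΦ, hΦp, hLΦ⟩ := hu.exists_straightening hp
  obtain ⟨ρ₀, hρ₀, hhalf⟩ := hΦ.exists_closedBall_addHaar_le_two_mul_image volume hΦp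
  obtain ⟨ρ, hρ, hgood⟩ := nhds_basis_closedBall.eventually_iff.1 <|
    (show ∀ᶠ q in 𝓝 p, q ∈ closedBall p ρ₀ from closedBall_mem_nhds p hρ₀).and <|
    (hu.eventually (by simp)).and <|
    hΦ.continuousAt.preimage_mem_nhds (ball_mem_nhds (Φ p) one_pos)
  have hu_cont : ContinuousOn u (closedBall p ρ) := fun q hq ↦
    (hgood hq).2.1.continuousAt.continuousWithinAt
  refine ⟨ρ, hρ, hu_cont, (2 * 2 ^ (finrank ℝ E - 1) / ‖fderiv ℝ u p‖).toNNReal, fun l r ↦ ?_⟩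
  set s := closedBall p ρ ∩ u ⁻¹' Icc l r
  have hs : MeasurableSet s :=
    (hu_cont.preimage_isClosed_of_isClosed isClosed_closedBall isClosed_Icc).measurableSet
  have hΦs : Φ '' s ⊆ fderiv ℝ u p ⁻¹' Icc l r ∩ ball (Φ p) 1 := by
    rintro _ ⟨q, hq, rfl⟩
    exact ⟨by rw [mem_preimage, hLΦ]; exact hq.2, (hgood hq.1).2.2⟩
  calc volume s ≤ 2 * volume (Φ '' s) := hhalf s (fun q hq ↦ (hgood hq.1).1) hs
    _ ≤ 2 * (ENNReal.ofReal ((2 * 1) ^ (finrank ℝ E - 1) / ‖fderiv ℝ u p‖) *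
          ENNReal.ofReal (r - l)) :=
        mul_le_mul_right ((measure_mono hΦs).trans
          (volume_preimage_Icc_inter_ball_le hp _ zero_le_one l r)) _
    _ = ENNReal.ofReal (2 * 2 ^ (finrank ℝ E - 1) / ‖fderiv ℝ u p‖) * ENNReal.ofReal (r - l) := by
        rw [← mul_assoc, ← ENNReal.ofReal_ofNat, ← ENNReal.ofReal_mul zero_le_two, mul_one,
          mul_div_assoc]

theorem exists_mem_nhds_setLIntegral_pow_mul_exp_le {F : Type*} [NormedAddCommGroup F]
    [NormedSpace ℝ F] {x : E → F} {p : E} (hx : ContDiffAt ℝ 1 x p) (hp : fderiv ℝ x p ≠ 0)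
    {a : ℝ} (ha : 0 < a) (k : ℕ) : ∃ V ∈ 𝓝 p, ∃ c : ℝ≥0, ∀ ε > 0, ∀ y : F,
      ∫⁻ q in V, ENNReal.ofReal (‖y - x q‖ ^ k * exp (-a * ‖y - x q‖ ^ 2 / ε)) ≤
        c * ENNReal.ofReal (ε ^ (((k : ℝ) + 1) / 2)) := by
  obtain ⟨φ, hφ, hφx⟩ := ContinuousLinearMap.exists_norm_le_one_comp_ne_zero hp
  have hu : ContDiffAt ℝ 1 (φ ∘ x) p := φ.contDiff.contDiffAt.comp p hx
  have hup : fderiv ℝ (φ ∘ x) p ≠ 0 := by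
    rwa [fderiv_comp p φ.differentiableAt (hx.differentiableAt one_ne_zero), φ.fderiv]
  obtain ⟨ρ, hρ, hu_cont, c, hc⟩ := exists_volume_closedBall_inter_preimage_Icc_le hu hup
  set M := exp (k ^ 2 / (2 * a))
  refine ⟨closedBall p ρ, closedBall_mem_nhds p hρ, (M * √(2 * π / a)).toNNReal * c,
    fun ε hε y ↦ ?_⟩
  have hkernel : ∀ q, ENNReal.ofReal (‖y - x q‖ ^ k * exp (-a * ‖y - x q‖ ^ 2 / ε)) ≤
      ENNReal.ofReal (M * √ε ^ k) *
        ENNReal.ofReal (exp (-(a / (2 * ε)) * ((φ ∘ x) q - φ y) ^ 2)) := fun q ↦ by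
    rw [← ENNReal.ofReal_mul (by positivity)]
    refine ENNReal.ofReal_le_ofReal (pow_mul_exp_le_of_abs_le ha hε ?_ k)
    calc |(φ ∘ x) q - φ y| = |φ (x q - y)| := by simp
      _ ≤ ‖φ‖ * ‖x q - y‖ := φ.le_opNorm _
      _ ≤ ‖y - x q‖ := by rw [norm_sub_rev]; exact mul_le_of_le_one_left (norm_nonneg _) hφ
  have hreal : M * √ε ^ k * √(π / (a / (2 * ε))) =
      M * √(2 * π / a) * ε ^ (((k : ℝ) + 1) / 2) := by
    rw [show π / (a / (2 * ε)) = 2 * π / a * ε by field_simp, sqrt_mul (by positivity),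
      ← sqrt_pow_mul_sqrt hε.le k]
    ring
  calc ∫⁻ q in closedBall p ρ, ENNReal.ofReal (‖y - x q‖ ^ k * exp (-a * ‖y - x q‖ ^ 2 / ε))
      ≤ ENNReal.ofReal (M * √ε ^ k) * ∫⁻ q in closedBall p ρ,
          ENNReal.ofReal (exp (-(a / (2 * ε)) * ((φ ∘ x) q - φ y) ^ 2)) := by
        rw [← lintegral_const_mul' _ _ ENNReal.ofReal_ne_top]; exact lintegral_mono hkernel
    _ ≤ ENNReal.ofReal (M * √ε ^ k) * (c * ENNReal.ofReal √(π / (a / (2 * ε)))) := by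
        refine mul_le_mul_right (lintegral_exp_neg_mul_sub_sq_comp_le
          (hu_cont.aemeasurable measurableSet_closedBall) (fun l r ↦ ?_) (by positivity) _) _
        rw [Measure.restrict_apply' measurableSet_closedBall, inter_comm]; exact hc l r
    _ = ENNReal.ofReal (M * √(2 * π / a)) * c * ENNReal.ofReal (ε ^ (((k : ℝ) + 1) / 2)) := by
        rw [mul_left_comm, ← ENNReal.ofReal_mul (by positivity), hreal,
          ENNReal.ofReal_mul (by positivity)]
        ring

end InnerProductSpace

theorem IsCompact.exists_setLIntegral_le_of_forall_nhds {α ι : Type*} [TopologicalSpace α]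
    [MeasurableSpace α] {μ : Measure α} {K : Set α} (hK : IsCompact K) {f : ι → α → ℝ≥0∞}
    {w : ι → ℝ≥0∞} (h : ∀ p ∈ K, ∃ V ∈ 𝓝 p, ∃ c : ℝ≥0, ∀ i, ∫⁻ q in V, f i q ∂μ ≤ c * w i) :
    ∃ C : ℝ≥0, ∀ i, ∫⁻ q in K, f i q ∂μ ≤ C * w i := by
  choose! V hV c hc using h
  obtain ⟨t, htK, hKt⟩ := hK.elim_nhds_subcover V hV
  refine ⟨∑ p ∈ t, c p, fun i ↦ ?_⟩
  calc ∫⁻ q in K, f i q ∂μ ≤ ∫⁻ q in ⋃ p ∈ (t : Set α), V p, f i q ∂μ := lintegral_mono_set hKt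
    _ ≤ ∑' p : (t : Set α), ∫⁻ q in V p, f i q ∂μ := by
        rw [← lintegral_sum_measure]
        exact lintegral_mono' (Measure.restrict_biUnion_le t.countable_toSet.to_subtype) le_rfl
    _ ≤ ∑ p ∈ t, c p * w i := by
        rw [Finset.tsum_subtype' t (fun p ↦ ∫⁻ q in V p, f i q ∂μ)]
        exact Finset.sum_le_sum fun p hp ↦ hc p (htK p hp) i
    _ = ↑(∑ p ∈ t, c p) * w i := by rw [ENNReal.ofNNReal_finsetSum, Finset.sum_mul]

theorem MeasureTheory.integral_le_of_lintegral_ofReal_le {α : Type*} [MeasurableSpace α]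
    {μ : Measure α} {f : α → ℝ} (hf : ∀ a, 0 ≤ f a) {B : ℝ} (hB : 0 ≤ B)
    (h : ∫⁻ a, ENNReal.ofReal (f a) ∂μ ≤ ENNReal.ofReal B) : ∫ a, f a ∂μ ≤ B := by
  refine (Real.le_norm_self _).trans ((norm_integral_le_lintegral_norm f).trans ?_)
  simp_rw [Real.norm_of_nonneg (hf _)]
  exact ENNReal.toReal_le_of_le_ofReal hB h

theorem kernel_column_estimate_general
    {n : ℕ}
    (K : Set (Eu n)) (hK : IsCompact K)
    (U : Set (Eu n)) (hU : IsOpen U) (hKU : K ⊆ U)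
    (x : Eu n → Eu n) (hx : ContDiffOn ℝ 1 x U)
    (hJ : ∀ x₀ ∈ K, fderiv ℝ x x₀ ≠ 0)
    (a : ℝ) (ha : 0 < a) (k : ℕ) :
    ∃ C : ℝ, ∀ ε ∈ Ioc (0:ℝ) 1, ∀ y : Eu n,
      (∫ x₀ in K, ‖y - x x₀‖^k * Real.exp (-a * ‖y - x x₀‖^2 / ε)) ≤
        C * ε ^ (((k:ℝ) + 1)/2) := by
  obtain ⟨C, hC⟩ := hK.exists_setLIntegral_le_of_forall_nhds (μ := volume)
    (f := fun (i : Ioi (0 : ℝ) × Eu n) q ↦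
      ENNReal.ofReal (‖i.2 - x q‖ ^ k * exp (-a * ‖i.2 - x q‖ ^ 2 / i.1)))
    (w := fun i ↦ ENNReal.ofReal (i.1 ^ (((k : ℝ) + 1) / 2))) fun p hp ↦ by
      obtain ⟨V, hV, c, hc⟩ := exists_mem_nhds_setLIntegral_pow_mul_exp_le
        (hx.contDiffAt (hU.mem_nhds (hKU hp))) (hJ p hp) ha k
      exact ⟨V, hV, c, fun i ↦ hc i.1 i.1.2 i.2⟩
  refine ⟨C, fun ε hε y ↦ integral_le_of_lintegral_ofReal_le (fun _ ↦ by positivity)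
    (mul_nonneg C.coe_nonneg (rpow_nonneg hε.1.le _)) ?_⟩
  rw [ENNReal.ofReal_mul C.coe_nonneg, ENNReal.ofReal_coe_nnreal]
  exact hC (⟨ε, hε.1⟩, y)

theorem kernel_column_estimate
    {n : ℕ} (hn : 1 ≤ n)
    (K : Set (Eu n)) (hK : IsCompact K)
    (U : Set (Eu n)) (hU : IsOpen U) (hKU : K ⊆ U)
    (x : Eu n → Eu n) (hx : ContDiffOn ℝ 1 x U)
    (hJ : ∀ x₀ ∈ K, fderiv ℝ x x₀ ≠ 0)
    (a : ℝ) (ha : 0 < a) (k : ℕ) :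
    ∃ C : ℝ, ∀ ε ∈ Ioc (0:ℝ) 1, ∀ y : Eu n,
      (∫ x₀ in K, ‖y - x x₀‖^k * Real.exp (-a * ‖y - x x₀‖^2 / ε)) ≤
        C * ε ^ (((k:ℝ) + 1)/2) :=
  kernel_column_estimate_general K hK U hU hKU x hx hJ a ha k
end
end

section
/- There exists a constant C such that for all ε ∈ (0,1], ‖ (β/(2πε))^{n/2} ∫_{I(0)} a(y,x₀) e^{−β|y−x₀|²/(2ε)} dx₀ ‖_{L²_y(ℝⁿ)} ≤ C (1 + ε^{−1/2}). -/
/- STATEMENT 11: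
Let I(0) ⊂ ℝⁿ be compact and, for each ε ∈ (0,1], let a : ℝⁿ × I(0) → ℂ be measurable with
|a(y,x₀)| ≤ C₀(1 + |y−x₀|/ε).  Then there is a constant C (independent of ε and a) with
‖ (β/(2πε))^{n/2} ∫_{I(0)} a(y,x₀) e^{−β|y−x₀|²/(2ε)} dx₀ ‖_{L²_y} ≤ C (1 + ε^{−1/2}). -/

noncomputable section

open MeasureTheory Set

/-- The L² norm on ℝⁿ (as an explicit integral). -/
def l2Norm {n : ℕ} (f : Eu n → ℂ) : ℝ := Real.sqrt (∫ x, ‖f x‖^2)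

/-! Split the kernel as `e^{-βr²/(2ε)} = e^{-βr²/(8ε)} · e^{-βr²/(4ε)} · e^{-βr²/(8ε)}` with
`r = |y - x₀|`. The first factor tames the growth of the amplitude: `(1 + r/ε) e^{-βr²/(8ε)}`
is at most `1 + O(ε^{-1/2})`, since `u e^{-cu²} ≤ c^{-1/2}`. Because `x₀` ranges over a
bounded set, the second factor is bounded by `e^{-β|y|²/8}` up to a constant, giving square
integrability in `y`. The third factor integrates in `x₀` to `(8πε/β)^{n/2}`, which exactly
cancels the normalisation `(β/(2πε))^{n/2}` up to the factor `4^{n/2}`. -/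

open Real

lemma mul_exp_neg_mul_sq_le {c : ℝ} (hc : 0 < c) (u : ℝ) :
    u * rexp (-c * u ^ 2) ≤ 1 / √c := by
  -- AM-GM: `√c u ≤ (1 + c u²) / 2 ≤ exp (c u²)`
  have h : √c * u ≤ rexp (c * u ^ 2) := by
    nlinarith [add_one_le_exp (c * u ^ 2), sq_nonneg (√c * u - 1), sq_sqrt hc.le]
  rw [neg_mul, exp_neg, ← div_eq_mul_inv, div_le_div_iff₀ (exp_pos _) (sqrt_pos.2 hc)]
  linarith

lemma one_add_div_mul_exp_neg_le {b ε : ℝ} (hb : 0 < b) (hε : 0 < ε) (r : ℝ) :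
    (1 + r / ε) * rexp (-(b / ε) * r ^ 2) ≤ 1 + 1 / √b * ε ^ (-(1 : ℝ) / 2) := by
  have hexp : rexp (-(b / ε) * r ^ 2) ≤ 1 :=
    exp_le_one_iff.2 (by have := div_pos hb hε; nlinarith [sq_nonneg r])
  have hdecay : r / ε * rexp (-(b / ε) * r ^ 2) ≤ 1 / √b * ε ^ (-(1 : ℝ) / 2) :=
    calc r / ε * rexp (-(b / ε) * r ^ 2) = ε⁻¹ * (r * rexp (-(b / ε) * r ^ 2)) := by ring
      _ ≤ ε⁻¹ * (1 / √(b / ε)) :=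
        mul_le_mul_of_nonneg_left (mul_exp_neg_mul_sq_le (div_pos hb hε) r) (by positivity)
      _ = 1 / √b * ε ^ (-(1 : ℝ) / 2) := by
        rw [neg_div, rpow_neg hε.le, ← sqrt_eq_rpow, sqrt_div' _ hε.le]
        field_simp [(sqrt_pos.2 hb).ne', (sqrt_pos.2 hε).ne']
        rw [sq_sqrt hε.le]
  nlinarith

lemma exp_neg_mul_sq_norm_sub_le {E : Type*} [SeminormedAddCommGroup E] {b R : ℝ} (hb : 0 ≤ b)
    {x : E} (hx : ‖x‖ ≤ R) (y : E) :
    rexp (-b * ‖y - x‖ ^ 2) ≤ rexp (b * R ^ 2) * rexp (-(b / 2) * ‖y‖ ^ 2) := by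
  rw [← exp_add, exp_le_exp]
  have hy : ‖y‖ ≤ ‖y - x‖ + R := (norm_le_norm_sub_add y x).trans (by linarith)
  have hyx : ‖y‖ ^ 2 ≤ 2 * ‖y - x‖ ^ 2 + 2 * R ^ 2 := by
    nlinarith [sq_nonneg (‖y - x‖ - R), norm_nonneg y, norm_nonneg x]
  nlinarith [mul_le_mul_of_nonneg_left hyx hb]

section Gaussian

variable {V : Type*} [NormedAddCommGroup V] [InnerProductSpace ℝ V] [FiniteDimensional ℝ V]
  [MeasurableSpace V] [BorelSpace V]

lemma integrable_rexp_neg_mul_sq_norm {b : ℝ} (hb : 0 < b) :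
    Integrable (fun v : V => rexp (-b * ‖v‖ ^ 2)) :=
  Integrable.of_integral_ne_zero <| by
    rw [GaussianFourier.integral_rexp_neg_mul_sq_norm hb]; positivity

lemma norm_setIntegral_le_of_norm_le_gaussian {E : Type*} [NormedAddCommGroup E]
    [NormedSpace ℝ E] {f : V → E} {s : Set V} {y : V} {K b : ℝ} (hs : MeasurableSet s)
    (hK : 0 ≤ K) (hb : 0 < b) (hf : ∀ x ∈ s, ‖f x‖ ≤ K * rexp (-b * ‖y - x‖ ^ 2)) :
    ‖∫ x in s, f x‖ ≤ K * (π / b) ^ (Module.finrank ℝ V / 2 : ℝ) := by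
  have hg : Integrable (fun x => K * rexp (-b * ‖y - x‖ ^ 2)) :=
    ((integrable_rexp_neg_mul_sq_norm hb).comp_sub_left y).const_mul K
  calc ‖∫ x in s, f x‖ ≤ ∫ x in s, ‖f x‖ := norm_integral_le_integral_norm _
    _ ≤ ∫ x in s, K * rexp (-b * ‖y - x‖ ^ 2) :=
      integral_mono_of_nonneg (.of_forall fun _ => norm_nonneg _) hg.restrict
        ((ae_restrict_iff' hs).2 (.of_forall hf))
    _ ≤ ∫ x, K * rexp (-b * ‖y - x‖ ^ 2) :=
      setIntegral_le_integral hg (.of_forall fun _ => by positivity)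
    _ = K * (π / b) ^ (Module.finrank ℝ V / 2 : ℝ) := by
      rw [integral_const_mul, integral_sub_left_eq_self (fun z => rexp (-b * ‖z‖ ^ 2)),
        GaussianFourier.integral_rexp_neg_mul_sq_norm hb]

end Gaussian

lemma l2Norm_le_of_norm_le_mul_exp {n : ℕ} {f : Eu n → ℂ} {K b : ℝ} (hK : 0 ≤ K) (hb : 0 < b)
    (hf : ∀ y, ‖f y‖ ≤ K * rexp (-b * ‖y‖ ^ 2)) :
    l2Norm f ≤ K * √(∫ y : Eu n, rexp (-(2 * b) * ‖y‖ ^ 2)) := by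
  have hsq : ∀ y, ‖f y‖ ^ 2 ≤ K ^ 2 * rexp (-(2 * b) * ‖y‖ ^ 2) := fun y =>
    calc ‖f y‖ ^ 2 ≤ (K * rexp (-b * ‖y‖ ^ 2)) ^ 2 := pow_le_pow_left₀ (norm_nonneg _) (hf y) 2
      _ = K ^ 2 * rexp (-(2 * b) * ‖y‖ ^ 2) := by rw [mul_pow, ← exp_nat_mul]; ring_nf
  calc l2Norm f ≤ √(∫ y : Eu n, K ^ 2 * rexp (-(2 * b) * ‖y‖ ^ 2)) :=
        sqrt_le_sqrt <| integral_mono_of_nonneg (.of_forall fun _ => by positivity)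
          ((integrable_rexp_neg_mul_sq_norm (by positivity)).const_mul _) (.of_forall hsq)
    _ = K * √(∫ y : Eu n, rexp (-(2 * b) * ‖y‖ ^ 2)) := by
      rw [integral_const_mul, sqrt_mul (sq_nonneg K), sqrt_sq hK]

lemma norm_mul_gaussian_kernel_le {V : Type*} [SeminormedAddCommGroup V] {β ε C₀ R : ℝ}
    (hβ : 0 < β) (hε : ε ∈ Ioc (0 : ℝ) 1) (hC₀ : 0 ≤ C₀) {x : V} (hx : ‖x‖ ≤ R) {y : V} {z : ℂ}
    (hz : ‖z‖ ≤ C₀ * (1 + ‖y - x‖ / ε)) :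
    ‖z * ((rexp (-β * ‖y - x‖ ^ 2 / (2 * ε)) : ℝ) : ℂ)‖ ≤
      C₀ * (1 + 1 / √(β / 8) * ε ^ (-(1 : ℝ) / 2)) * rexp (β / 4 * R ^ 2) *
        rexp (-(β / 8) * ‖y‖ ^ 2) * rexp (-(β / (8 * ε)) * ‖y - x‖ ^ 2) := by
  obtain ⟨hε0, hε1⟩ := hε
  set r := ‖y - x‖
  have hsplit : rexp (-β * r ^ 2 / (2 * ε)) = rexp (-(β / 8 / ε) * r ^ 2) *
      rexp (-(β / (4 * ε)) * r ^ 2) * rexp (-(β / (8 * ε)) * r ^ 2) := by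
    rw [← exp_add, ← exp_add]; congr 1; field_simp; ring
  have hgrowth := one_add_div_mul_exp_neg_le (by positivity : 0 < β / 8) hε0 r
  have hdecay : rexp (-(β / (4 * ε)) * r ^ 2) ≤ rexp (β / 4 * R ^ 2) * rexp (-(β / 8) * ‖y‖ ^ 2) :=
    calc rexp (-(β / (4 * ε)) * r ^ 2) ≤ rexp (-(β / 4) * r ^ 2) := by
          gcongr rexp (?_ * _)
          exact neg_le_neg (div_le_div_of_nonneg_left hβ.le (by positivity) (by linarith))
      _ ≤ _ := by
          convert exp_neg_mul_sq_norm_sub_le (by positivity : 0 ≤ β / 4) hx y using 3; ring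
  rw [norm_mul, Complex.norm_real, norm_of_nonneg (exp_pos _).le, hsplit]
  calc ‖z‖ * (rexp (-(β / 8 / ε) * r ^ 2) * rexp (-(β / (4 * ε)) * r ^ 2) *
        rexp (-(β / (8 * ε)) * r ^ 2))
      ≤ C₀ * (1 + r / ε) * (rexp (-(β / 8 / ε) * r ^ 2) * rexp (-(β / (4 * ε)) * r ^ 2) *
        rexp (-(β / (8 * ε)) * r ^ 2)) := by gcongr
    _ = C₀ * ((1 + r / ε) * rexp (-(β / 8 / ε) * r ^ 2)) * rexp (-(β / (4 * ε)) * r ^ 2) *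
        rexp (-(β / (8 * ε)) * r ^ 2) := by ring
    _ ≤ C₀ * (1 + 1 / √(β / 8) * ε ^ (-(1 : ℝ) / 2)) *
        (rexp (β / 4 * R ^ 2) * rexp (-(β / 8) * ‖y‖ ^ 2)) * rexp (-(β / (8 * ε)) * r ^ 2) := by
        gcongr
    _ = _ := by ring

theorem gaussian_superposition_L2_bound_general
    {n : ℕ} (β C₀ : ℝ) (hβ : 0 < β) (hC₀ : 0 < C₀)
    (I0 : Set (Eu n)) (hI0 : IsCompact I0) :
    ∃ C : ℝ, ∀ ε ∈ Ioc (0:ℝ) 1, ∀ a : Eu n → Eu n → ℂ,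
      Measurable (Function.uncurry a) →
      (∀ y : Eu n, ∀ x₀ ∈ I0, ‖a y x₀‖ ≤ C₀ * (1 + ‖y - x₀‖ / ε)) →
      l2Norm (fun y => (((β/(2*Real.pi*ε)) ^ ((n:ℝ)/2) : ℝ) : ℂ) *
          ∫ x₀ in I0, a y x₀ * ((Real.exp (-β * ‖y - x₀‖^2 / (2*ε)) : ℝ) : ℂ)) ≤
        C * (1 + ε ^ (-(1:ℝ)/2)) := by
  obtain ⟨R, hR⟩ := hI0.isBounded.subset_closedBall 0
  set M := 1 / √(β / 8)
  set K := C₀ * rexp (β / 4 * R ^ 2) * 4 ^ ((n : ℝ) / 2) with hK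
  set G := √(∫ y : Eu n, rexp (-(2 * (β / 8)) * ‖y‖ ^ 2))
  refine ⟨K * (1 + M) * G, fun ε hε a _ ha => ?_⟩
  set s := ε ^ (-(1 : ℝ) / 2)
  have hε0 := hε.1
  have hmass : (β / (2 * π * ε)) ^ ((n : ℝ) / 2) * (π / (β / (8 * ε))) ^ ((n : ℝ) / 2) =
      4 ^ ((n : ℝ) / 2) := by
    rw [← mul_rpow (by positivity) (by positivity)]; congr 1; field_simp; ring
  have hpoint : ∀ y : Eu n, ‖(((β / (2 * π * ε)) ^ ((n : ℝ) / 2) : ℝ) : ℂ) *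
      ∫ x₀ in I0, a y x₀ * ((rexp (-β * ‖y - x₀‖ ^ 2 / (2 * ε)) : ℝ) : ℂ)‖ ≤
        K * (1 + M * s) * rexp (-(β / 8) * ‖y‖ ^ 2) := fun y => by
    have hint := norm_setIntegral_le_of_norm_le_gaussian hI0.measurableSet (by positivity)
      (by positivity) fun x hx =>
        norm_mul_gaussian_kernel_le hβ hε hC₀.le (by simpa using hR hx) (ha y x hx)
    rw [finrank_euclideanSpace_fin] at hint
    rw [norm_mul, Complex.norm_real, norm_of_nonneg (by positivity)]
    calc _ ≤ (β / (2 * π * ε)) ^ ((n : ℝ) / 2) * (C₀ * (1 + M * s) * rexp (β / 4 * R ^ 2) *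
          rexp (-(β / 8) * ‖y‖ ^ 2) * (π / (β / (8 * ε))) ^ ((n : ℝ) / 2)) := by gcongr
      _ = _ := by rw [hK, ← hmass]; ring
  have hs : 1 + M * s ≤ (1 + M) * (1 + s) := by
    nlinarith [show 0 ≤ M by positivity, show 0 ≤ s by positivity]
  calc _ ≤ K * (1 + M * s) * G :=
        l2Norm_le_of_norm_le_mul_exp (by positivity) (by positivity) hpoint
    _ ≤ K * ((1 + M) * (1 + s)) * G := by gcongr
    _ = K * (1 + M) * G * (1 + s) := by ring

theorem gaussian_superposition_L2_bound
    {n : ℕ} (hn : 1 ≤ n) (β C₀ : ℝ) (hβ : 0 < β) (hC₀ : 0 < C₀)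
    (I0 : Set (Eu n)) (hI0 : IsCompact I0) :
    ∃ C : ℝ, ∀ ε ∈ Ioc (0:ℝ) 1, ∀ a : Eu n → Eu n → ℂ,
      Measurable (Function.uncurry a) →
      (∀ y : Eu n, ∀ x₀ ∈ I0, ‖a y x₀‖ ≤ C₀ * (1 + ‖y - x₀‖ / ε)) →
      l2Norm (fun y => (((β/(2*Real.pi*ε)) ^ ((n:ℝ)/2) : ℝ) : ℂ) *
          ∫ x₀ in I0, a y x₀ * ((Real.exp (-β * ‖y - x₀‖^2 / (2*ε)) : ℝ) : ℂ)) ≤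
        C * (1 + ε ^ (-(1:ℝ)/2)) :=
  gaussian_superposition_L2_bound_general β C₀ hβ hC₀ I0 hI0
end
end

section
/- The solution M(t) of the matrix Riccati equation M'(t) + A(t) + B(t)M(t) + M(t)B(t)ᵀ + M(t)C(t)M(t) = 0, M(0) = M₀, exists for all t ∈ ℝ and satisfies: (i) M(t) is symmetric (M(t) = M(t)ᵀ) for all t, and (ii) the imaginary part Im M(t) is positive definite for all t. -/
/-!
Write `M = Y X⁻¹`, where `(X, Y)` solves the linear system `X' = Bᵀ X + C Y`, `Y' = -A X - B Y`,
`X(0) = 1`, `Y(0) = M₀`. A linear ODE with continuous coefficients has a global solution (some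
iterate of the Picard operator on `[-T, T]` is a contraction), and wherever `X` is invertible, `M`
solves the Riccati equation. For an anti-multiplicative map `τ` (transpose, or conjugate
transpose since the coefficients are real), the symmetry of `A` and `C` makes `τ(X) Y - τ(Y) X`
a constant of motion. For `τ = ᵀ` it vanishes, so `M` is symmetric; for `τ = ᴴ` it equals
`M₀ - M₀ᴴ = 2i Im M₀`. Its quadratic form would vanish on a kernel vector of `X`, so `X(t)` is
never singular, and `Im M = (X⁻¹)ᴴ (Im M₀) X⁻¹` is positive definite.
-/

open Set Function MeasureTheory
-- The L² operator norm makes matrices a Banach algebra whose topology is definitionally the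
-- entrywise one.
open scoped Nat NNReal Interval Topology Ring ComplexOrder Matrix.Norms.L2Operator

noncomputable section

open Matrix

section LinearODE

variable {E : Type*} [NormedAddCommGroup E] [NormedSpace ℝ E]

theorem norm_intervalIntegral_le_mul_pow_div {G : ℝ → E} {c t : ℝ} {m : ℕ}
    (h : ∀ s ∈ Ι 0 t, ‖G s‖ ≤ c * |s| ^ m) :
    ‖∫ s in 0..t, G s‖ ≤ c * |t| ^ (m + 1) / (m + 1) := by
  rw [intervalIntegral.norm_integral_eq_norm_integral_uIoc]
  have hint : IntegrableOn (fun s : ℝ => c * |s - 0| ^ m) (Ι 0 t) :=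
    (by fun_prop : Continuous fun s : ℝ => c * |s - 0| ^ m).integrableOn_uIoc
  calc ‖∫ s in Ι 0 t, G s‖ ≤ ∫ s in Ι 0 t, c * |s - 0| ^ m :=
        norm_integral_le_of_norm_le hint
          (ae_restrict_of_forall_mem measurableSet_uIoc (by simpa using h))
    _ = c * |t| ^ (m + 1) / (m + 1) := by
        rw [integral_const_mul, integral_pow_abs_sub_uIoc, sub_zero, mul_div_assoc]

section Picard

variable (L : C(ℝ, E →L[ℝ] E)) (x₀ : E) {T : ℝ} (hT : 0 ≤ T)

def linearPicard (α : C(Icc (-T) T, E)) : C(Icc (-T) T, E) where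
  toFun t := x₀ + ∫ s in 0..t, L s (ContinuousMap.IccExtend (neg_le_self hT) α s)
  continuous_toFun := by
    have : Continuous fun s => L s (ContinuousMap.IccExtend (neg_le_self hT) α s) := by fun_prop
    exact continuous_const.add
      ((intervalIntegral.continuous_primitive (fun _ _ => this.intervalIntegrable _ _) 0).comp
        continuous_subtype_val)

@[simp]
theorem linearPicard_apply (α : C(Icc (-T) T, E)) (t : Icc (-T) T) :
    linearPicard L x₀ hT α t =
      x₀ + ∫ s in 0..t, L s (ContinuousMap.IccExtend (neg_le_self hT) α s) :=
  rfl

theorem dist_linearPicard_iterate_apply_le {K : ℝ} (hK : ∀ s ∈ Icc (-T) T, ‖L s‖ ≤ K) (m : ℕ)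
    (α β : C(Icc (-T) T, E)) (t : Icc (-T) T) :
    dist ((linearPicard L x₀ hT)^[m] α t) ((linearPicard L x₀ hT)^[m] β t) ≤
      (K * |(t : ℝ)|) ^ m / m ! * dist α β := by
  have hK0 : 0 ≤ K := (norm_nonneg _).trans (hK 0 ⟨neg_nonpos.2 hT, hT⟩)
  induction m generalizing t with
  | zero => simpa using ContinuousMap.dist_apply_le_dist t
  | succ m ih =>
    set f := (linearPicard L x₀ hT)^[m] α
    set g := (linearPicard L x₀ hT)^[m] β
    have hcont (h : C(Icc (-T) T, E)) :
        Continuous fun s => L s (ContinuousMap.IccExtend (neg_le_self hT) h s) := by fun_prop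
    have hbound : ∀ s ∈ Ι 0 (t : ℝ),
        ‖L s (ContinuousMap.IccExtend (neg_le_self hT) f s) -
            L s (ContinuousMap.IccExtend (neg_le_self hT) g s)‖ ≤
          K ^ (m + 1) / m ! * dist α β * |s| ^ m := by
      intro s hs
      have hsT : s ∈ Icc (-T) T :=
        uIcc_subset_Icc ⟨neg_nonpos.2 hT, hT⟩ t.2 (uIoc_subset_uIcc hs)
      rw [← map_sub]
      calc _ ≤ K * dist (ContinuousMap.IccExtend (neg_le_self hT) f s)
              (ContinuousMap.IccExtend (neg_le_self hT) g s) := by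
            rw [dist_eq_norm]
            exact (L s).le_of_opNorm_le (hK s hsT) _
        _ ≤ K * ((K * |s|) ^ m / m ! * dist α β) := by
            simp only [ContinuousMap.coe_IccExtend, IccExtend_of_mem _ _ hsT]
            exact mul_le_mul_of_nonneg_left (ih ⟨s, hsT⟩) hK0
        _ = _ := by rw [mul_pow]; ring
    rw [iterate_succ_apply', iterate_succ_apply', linearPicard_apply, linearPicard_apply,
      dist_eq_norm, add_sub_add_left_eq_sub,
      ← intervalIntegral.integral_sub ((hcont f).intervalIntegrable _ _)
        ((hcont g).intervalIntegrable _ _)]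
    refine (norm_intervalIntegral_le_mul_pow_div hbound).trans_eq ?_
    rw [Nat.factorial_succ]
    push_cast
    field_simp
    ring

theorem exists_contractingWith_linearPicard_iterate :
    ∃ (m : ℕ) (q : ℝ≥0), ContractingWith q (linearPicard L x₀ hT)^[m] := by
  obtain ⟨K, hK⟩ :=
    (isCompact_Icc (a := -T) (b := T)).exists_bound_of_continuousOn L.continuous.continuousOn
  obtain ⟨m, hm⟩ :=
    ((FloorSemiring.tendsto_pow_div_factorial_atTop (K * T)).eventually_lt_const one_pos).exists
  have hK0 : 0 ≤ K := (norm_nonneg _).trans (hK 0 ⟨neg_nonpos.2 hT, hT⟩)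
  refine ⟨m, ((K * T) ^ m / m !).toNNReal, by simpa using hm, ?_⟩
  refine LipschitzWith.of_dist_le_mul fun α β => (ContinuousMap.dist_le (by positivity)).2 ?_
  intro t
  refine (dist_linearPicard_iterate_apply_le L x₀ hT hK m α β t).trans ?_
  rw [Real.coe_toNNReal _ (by positivity)]
  gcongr
  exact abs_le.2 t.2

end Picard

theorem exists_hasDerivAt_clm_apply_Icc [CompleteSpace E] (L : C(ℝ, E →L[ℝ] E)) (x₀ : E)
    {T : ℝ} (hT : 0 ≤ T) :
    ∃ f : ℝ → E, f 0 = x₀ ∧ ∀ t ∈ Icc (-T) T, HasDerivAt f (L t (f t)) t := by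
  obtain ⟨m, q, hq⟩ := exists_contractingWith_linearPicard_iterate L x₀ hT
  set α := hq.fixedPoint
  have hα : linearPicard L x₀ hT α = α := hq.isFixedPt_fixedPoint_iterate
  have hcont : Continuous fun s => L s (ContinuousMap.IccExtend (neg_le_self hT) α s) := by
    fun_prop
  refine ⟨fun t => x₀ + ∫ s in 0..t, L s (ContinuousMap.IccExtend (neg_le_self hT) α s),
    by simp, fun t ht => ?_⟩
  have hαt : ContinuousMap.IccExtend (neg_le_self hT) α t =
      x₀ + ∫ s in 0..t, L s (ContinuousMap.IccExtend (neg_le_self hT) α s) := by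
    rw [ContinuousMap.coe_IccExtend, IccExtend_of_mem _ _ ht]
    exact (DFunLike.congr_fun hα ⟨t, ht⟩).symm
  beta_reduce
  rw [← hαt]
  exact (intervalIntegral.integral_hasDerivAt_right (hcont.intervalIntegrable _ _)
    (hcont.stronglyMeasurableAtFilter _ _) hcont.continuousAt).const_add x₀

variable {L : ℝ → E →L[ℝ] E}

theorem eqOn_Ioo_of_hasDerivAt_clm_apply (hL : Continuous L) {f g : ℝ → E} {T : ℝ}
    (hf : ∀ t ∈ Ioo (-T) T, HasDerivAt f (L t (f t)) t)
    (hg : ∀ t ∈ Ioo (-T) T, HasDerivAt g (L t (g t)) t) (h0 : f 0 = g 0) :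
    EqOn f g (Ioo (-T) T) := by
  rcases le_or_gt T 0 with hT | hT
  · intro t ht
    linarith [ht.1, ht.2]
  obtain ⟨K, hK⟩ :=
    (isCompact_Icc (a := -T) (b := T)).exists_bound_of_continuousOn hL.continuousOn
  refine ODE_solution_unique_of_mem_Ioo (v := fun t x => L t x) (s := fun _ => univ)
    (K := K.toNNReal) (fun t ht => ?_) ⟨neg_lt_zero.2 hT, hT⟩ (fun t ht => ⟨hf t ht, trivial⟩)
    (fun t ht => ⟨hg t ht, trivial⟩) h0
  exact ((L t).lipschitz.weaken
    (NNReal.le_toNNReal_of_coe_le (hK t (Ioo_subset_Icc_self ht)))).lipschitzOnWith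

theorem exists_hasDerivAt_clm_apply [CompleteSpace E] (hL : Continuous L) (x₀ : E) :
    ∃ f : ℝ → E, f 0 = x₀ ∧ ∀ t, HasDerivAt f (L t (f t)) t := by
  choose F hF0 hF using fun m : ℕ => exists_hasDerivAt_clm_apply_Icc ⟨L, hL⟩ x₀ m.cast_nonneg
  have hF_Ioo (m : ℕ) {T : ℝ} (hT : T ≤ m) :
      ∀ t ∈ Ioo (-T) T, HasDerivAt (F m) (L t (F m t)) t :=
    fun t ht => hF m t (Icc_subset_Icc (neg_le_neg hT) hT (Ioo_subset_Icc_self ht))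
  have hF_eq (k l : ℕ) (s : ℝ) (hk : |s| < k) (hl : |s| < l) : F k s = F l s :=
    eqOn_Ioo_of_hasDerivAt_clm_apply hL (hF_Ioo k (min_le_left _ _))
      (hF_Ioo l (min_le_right _ _)) ((hF0 k).trans (hF0 l).symm) (abs_lt.1 (lt_min hk hl))
  have hlt (s : ℝ) : |s| < ((⌊|s|⌋₊ + 1 : ℕ) : ℝ) := by exact_mod_cast Nat.lt_floor_add_one |s|
  refine ⟨fun t => F (⌊|t|⌋₊ + 1) t, by simpa using hF0 1, fun t => ?_⟩
  have hnear : ∀ᶠ s in 𝓝 t, F (⌊|s|⌋₊ + 1) s = F (⌊|t|⌋₊ + 1) s := by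
    filter_upwards [(continuous_abs.isOpen_preimage _ isOpen_Iio).mem_nhds (hlt t)] with s hs
    exact hF_eq _ _ s (hlt s) hs
  exact (hF _ t (abs_le.1 (hlt t).le)).congr_of_eventuallyEq hnear

end LinearODE

theorem mul_ringInverse_sub_map_eq {R : Type*} [Ring R] {τ : R → R}
    (hτ : ∀ a b, τ (a * b) = τ b * τ a) (hτ1 : τ 1 = 1) {X : R} (hX : IsUnit X) (Y : R) :
    Y * X⁻¹ʳ - τ (Y * X⁻¹ʳ) = τ X⁻¹ʳ * (τ X * Y - τ Y * X) * X⁻¹ʳ := by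
  have h : X * X⁻¹ʳ = 1 := Ring.mul_inverse_cancel X hX
  calc Y * X⁻¹ʳ - τ (Y * X⁻¹ʳ) = τ (X * X⁻¹ʳ) * (Y * X⁻¹ʳ) - τ (Y * X⁻¹ʳ) * (X * X⁻¹ʳ) := by
        rw [h, hτ1, one_mul, mul_one]
    _ = _ := by rw [hτ, hτ]; noncomm_ring

section NormedAlgebra

variable {R : Type*} [NormedRing R] [NormedAlgebra ℝ R]

theorem HasDerivAt.ringInverse [HasSummableGeomSeries R] {X : ℝ → R} {X' : R} {t : ℝ}
    (hX : HasDerivAt X X' t) (hu : IsUnit (X t)) :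
    HasDerivAt (fun s => (X s)⁻¹ʳ) (-(X t)⁻¹ʳ * X' * (X t)⁻¹ʳ) t := by
  obtain ⟨u, hu⟩ := hu
  have h := hasFDerivAt_ringInverse (𝕜 := ℝ) u
  rw [hu] at h
  refine (h.comp_hasDerivAt t hX).congr_deriv ?_
  simp [← hu]

theorem HasDerivAt.mul_ringInverse_of_linear [HasSummableGeomSeries R] {X Y : ℝ → R}
    {P Q S T : R} {t : ℝ} (hX : HasDerivAt X (P * X t + Q * Y t) t)
    (hY : HasDerivAt Y (S * X t + T * Y t) t) (hu : IsUnit (X t)) :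
    HasDerivAt (fun s => Y s * (X s)⁻¹ʳ)
      (S + T * (Y t * (X t)⁻¹ʳ) - Y t * (X t)⁻¹ʳ * P - Y t * (X t)⁻¹ʳ * Q * (Y t * (X t)⁻¹ʳ))
      t := by
  convert hY.fun_mul (hX.ringInverse hu) using 1
  set u := (X t)⁻¹ʳ
  have h : X t * u = 1 := Ring.mul_inverse_cancel _ hu
  calc _ = S + T * (Y t * u) - Y t * u * P - Y t * u * Q * (Y t * u) +
        (S - Y t * u * P) * (X t * u - 1) := by rw [h, sub_self, mul_zero, add_zero]
    _ = _ := by noncomm_ring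

theorem exists_hasDerivAt_linear_system [CompleteSpace R] {P Q S T : ℝ → R} (hP : Continuous P)
    (hQ : Continuous Q) (hS : Continuous S) (hT : Continuous T) (X₀ Y₀ : R) :
    ∃ X Y : ℝ → R, X 0 = X₀ ∧ Y 0 = Y₀ ∧ ∀ t,
      HasDerivAt X (P t * X t + Q t * Y t) t ∧ HasDerivAt Y (S t * X t + T t * Y t) t := by
  let mulL := ContinuousLinearMap.mul ℝ R
  let fst := ContinuousLinearMap.fst ℝ R R
  let snd := ContinuousLinearMap.snd ℝ R R
  let L : ℝ → R × R →L[ℝ] R × R := fun t =>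
    (ContinuousLinearMap.inl ℝ R R).comp ((mulL (P t)).comp fst + (mulL (Q t)).comp snd) +
      (ContinuousLinearMap.inr ℝ R R).comp ((mulL (S t)).comp fst + (mulL (T t)).comp snd)
  obtain ⟨Z, hZ0, hZ⟩ := exists_hasDerivAt_clm_apply (L := L) (by fun_prop) (X₀, Y₀)
  refine ⟨fun t => (Z t).1, fun t => (Z t).2, by simp [hZ0], by simp [hZ0], fun t => ⟨?_, ?_⟩⟩
  · simpa [L, mulL, fst, snd, Function.comp_def] using fst.hasFDerivAt.comp_hasDerivAt t (hZ t)
  · simpa [L, mulL, fst, snd, Function.comp_def] using snd.hasFDerivAt.comp_hasDerivAt t (hZ t)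

theorem map_mul_sub_map_mul_eq_of_hasDerivAt (τ : R →L[ℝ] R) (hτ : ∀ a b, τ (a * b) = τ b * τ a)
    {P Q S T X Y : ℝ → R} (hP : ∀ t, τ (P t) = -T t) (hT : ∀ t, τ (T t) = -P t)
    (hQ : ∀ t, τ (Q t) = Q t) (hS : ∀ t, τ (S t) = S t)
    (hX : ∀ t, HasDerivAt X (P t * X t + Q t * Y t) t)
    (hY : ∀ t, HasDerivAt Y (S t * X t + T t * Y t) t) (t : ℝ) :
    τ (X t) * Y t - τ (Y t) * X t = τ (X 0) * Y 0 - τ (Y 0) * X 0 := by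
  have hd (s : ℝ) : HasDerivAt (fun s => τ (X s) * Y s - τ (Y s) * X s) 0 s := by
    refine (((τ.hasFDerivAt.comp_hasDerivAt s (hX s)).fun_mul (hY s)).fun_sub
      ((τ.hasFDerivAt.comp_hasDerivAt s (hY s)).fun_mul (hX s))).congr_deriv ?_
    simp only [Function.comp_apply, map_add, hτ, hP, hT, hQ, hS]
    noncomm_ring
  exact is_const_of_deriv_eq_zero (fun s => (hd s).differentiableAt) (fun s => (hd s).deriv) t 0

end NormedAlgebra

namespace Matrix

theorem conjTranspose_map_ofReal {m n : Type*} (A : Matrix m n ℝ) :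
    (A.map Complex.ofReal)ᴴ = Aᵀ.map Complex.ofReal := by
  ext i j
  simp [conjTranspose_apply]

theorem sub_conjTranspose_eq_smul_map_im {n : Type*} {N : Matrix n n ℂ} (h : Nᵀ = N) :
    N - Nᴴ = (2 * Complex.I) • (N.map Complex.im).map Complex.ofReal := by
  ext i j
  have hji : N j i = N i j := congrFun (congrFun h i) j
  simp only [sub_apply, conjTranspose_apply, smul_apply, map_apply, hji, smul_eq_mul,
    RCLike.star_def, Complex.sub_conj]
  push_cast
  ring

theorem transpose_mul_ringInverse_of_transpose_mul_eq {n α : Type*} [Fintype n] [DecidableEq n]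
    [CommRing α] {X Y : Matrix n n α} (hX : IsUnit X) (h : Xᵀ * Y = Yᵀ * X) :
    (Y * X⁻¹ʳ)ᵀ = Y * X⁻¹ʳ := by
  have := mul_ringInverse_sub_map_eq (fun a b => transpose_mul a b) transpose_one hX Y
  rwa [h, sub_self, mul_zero, zero_mul, sub_eq_zero, eq_comm] at this

variable {n : Type*} [Fintype n]

theorem re_star_dotProduct_map_ofReal_mulVec (P : Matrix n n ℝ) (v : n → ℂ) :
    (star v ⬝ᵥ (P.map Complex.ofReal *ᵥ v)).re =
      (fun i => (v i).re) ⬝ᵥ (P *ᵥ fun i => (v i).re) +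
        (fun i => (v i).im) ⬝ᵥ (P *ᵥ fun i => (v i).im) := by
  simp only [dotProduct, mulVec, Finset.mul_sum, Complex.re_sum, ← Finset.sum_add_distrib]
  refine Finset.sum_congr rfl fun i _ => Finset.sum_congr rfl fun j _ => ?_
  simp only [Pi.star_apply, map_apply, Complex.star_def, Complex.mul_re, Complex.conj_re,
    Complex.conj_im, Complex.ofReal_re, Complex.ofReal_im, Complex.mul_im]
  ring

theorem posDef_map_ofReal_iff {P : Matrix n n ℝ} :
    (P.map Complex.ofReal).PosDef ↔ P.PosDef := by
  have hherm : (P.map Complex.ofReal).IsHermitian ↔ P.IsHermitian :=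
    isHermitian_map_iff (fun r => (Complex.conj_ofReal r).symm) Complex.ofReal_injective
  constructor
  · intro h
    refine PosDef.of_dotProduct_mulVec_pos (hherm.1 h.isHermitian) fun x hx => ?_
    have hx' : (fun i => (x i : ℂ)) ≠ 0 := fun h0 =>
      hx (funext fun i => Complex.ofReal_injective (congrFun h0 i))
    simpa [re_star_dotProduct_map_ofReal_mulVec] using
      (Complex.pos_iff.1 (h.dotProduct_mulVec_pos hx')).1
  · intro h
    refine PosDef.of_dotProduct_mulVec_pos (hherm.2 h.isHermitian) fun v hv => ?_
    refine Complex.pos_iff.2 ⟨?_, ?_⟩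
    · have hq (x : n → ℝ) : 0 ≤ x ⬝ᵥ (P *ᵥ x) := by
        simpa using h.posSemidef.dotProduct_mulVec_nonneg x
      have hq' {x : n → ℝ} (hx : x ≠ 0) : 0 < x ⬝ᵥ (P *ᵥ x) := by
        simpa using h.dotProduct_mulVec_pos hx
      rw [re_star_dotProduct_map_ofReal_mulVec]
      by_cases hre : (fun i => (v i).re) = 0
      · have him : (fun i => (v i).im) ≠ 0 := fun him =>
          hv (funext fun i => Complex.ext (congrFun hre i) (congrFun him i))
        exact add_pos_of_nonneg_of_pos (hq _) (hq' him)
      · exact add_pos_of_pos_of_nonneg (hq' hre) (hq _)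
    · simpa using ((hherm.2 h.isHermitian).im_star_dotProduct_mulVec_self v).symm

variable [DecidableEq n]

theorem isUnit_of_conjTranspose_mul_sub_eq_smul {X Y P : Matrix n n ℂ} {c : ℂ} (hc : c ≠ 0)
    (hP : P.PosDef) (h : Xᴴ * Y - Yᴴ * X = c • P) : IsUnit X := by
  rw [isUnit_iff_isUnit_det, isUnit_iff_ne_zero]
  intro hdet
  obtain ⟨v, hv, hXv⟩ := exists_mulVec_eq_zero_iff.2 hdet
  have h0 : star v ⬝ᵥ ((Xᴴ * Y - Yᴴ * X) *ᵥ v) = 0 := by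
    rw [sub_mulVec, ← mulVec_mulVec, ← mulVec_mulVec, hXv, mulVec_zero, sub_zero,
      dotProduct_mulVec, ← star_mulVec, hXv, star_zero, zero_dotProduct]
  rw [h, smul_mulVec, dotProduct_smul, smul_eq_mul] at h0
  exact (hP.dotProduct_mulVec_pos hv).ne' ((mul_eq_zero.1 h0).resolve_left hc)

theorem posDef_map_im_mul_ringInverse {X Y : Matrix n n ℂ} {P : Matrix n n ℝ} (hP : P.PosDef)
    (h : Xᴴ * Y - Yᴴ * X = (2 * Complex.I) • P.map Complex.ofReal)
    (hsymm : (Y * X⁻¹ʳ)ᵀ = Y * X⁻¹ʳ) :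
    ((Y * X⁻¹ʳ).map Complex.im).PosDef := by
  have h2I : 2 * Complex.I ≠ 0 := mul_ne_zero two_ne_zero Complex.I_ne_zero
  have hPc := posDef_map_ofReal_iff.2 hP
  have hX : IsUnit X := isUnit_of_conjTranspose_mul_sub_eq_smul h2I hPc h
  have hIm : ((Y * X⁻¹ʳ).map Complex.im).map Complex.ofReal =
      star X⁻¹ʳ * P.map Complex.ofReal * X⁻¹ʳ := by
    refine smul_right_injective _ h2I ?_
    have := mul_ringInverse_sub_map_eq (fun a b => star_mul a b) (star_one _) hX Y
    simp only [star_eq_conjTranspose, h] at this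
    rw [sub_conjTranspose_eq_smul_map_im hsymm] at this
    simpa [star_eq_conjTranspose] using this
  rw [← posDef_map_ofReal_iff, hIm]
  exact hX.ringInverse.posDef_star_left_conjugate_iff.2 hPc

end Matrix

section LinearizedHamiltonianFlow

variable {n : Type*} [Fintype n] [DecidableEq n]

def IsLinearizedHamiltonianFlow (A B C : ℝ → Matrix n n ℝ) (X Y : ℝ → Matrix n n ℂ) : Prop :=
  ∀ t, HasDerivAt X (((B t).map Complex.ofReal)ᵀ * X t + (C t).map Complex.ofReal * Y t) t ∧
    HasDerivAt Y (-(A t).map Complex.ofReal * X t + -(B t).map Complex.ofReal * Y t) t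

variable {A B C : ℝ → Matrix n n ℝ}

theorem exists_isLinearizedHamiltonianFlow (hA : Continuous A) (hB : Continuous B)
    (hC : Continuous C) (X₀ Y₀ : Matrix n n ℂ) :
    ∃ X Y, X 0 = X₀ ∧ Y 0 = Y₀ ∧ IsLinearizedHamiltonianFlow A B C X Y :=
  exists_hasDerivAt_linear_system (by fun_prop) (by fun_prop) (by fun_prop) (by fun_prop) X₀ Y₀

namespace IsLinearizedHamiltonianFlow

variable {X Y : ℝ → Matrix n n ℂ}

theorem transpose_mul_sub_transpose_mul (h : IsLinearizedHamiltonianFlow A B C X Y)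
    (hA : ∀ t, (A t)ᵀ = A t) (hC : ∀ t, (C t)ᵀ = C t) (t : ℝ) :
    (X t)ᵀ * Y t - (Y t)ᵀ * X t = (X 0)ᵀ * Y 0 - (Y 0)ᵀ * X 0 := by
  let τ : Matrix n n ℂ →L[ℝ] Matrix n n ℂ :=
    (transposeLinearEquiv n n ℝ ℂ).toContinuousLinearEquiv
  have hτ (N : Matrix n n ℂ) : τ N = Nᵀ := rfl
  simpa [hτ] using map_mul_sub_map_mul_eq_of_hasDerivAt τ (fun a b => by simp [hτ])
    (fun t => by simp [hτ]) (fun t => by simp [hτ]) (fun t => by simp [hτ, ← transpose_map, hC])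
    (fun t => by simp [hτ, ← transpose_map, hA]) (fun t => (h t).1) (fun t => (h t).2) t

theorem conjTranspose_mul_sub_conjTranspose_mul (h : IsLinearizedHamiltonianFlow A B C X Y)
    (hA : ∀ t, (A t)ᵀ = A t) (hC : ∀ t, (C t)ᵀ = C t) (t : ℝ) :
    (X t)ᴴ * Y t - (Y t)ᴴ * X t = (X 0)ᴴ * Y 0 - (Y 0)ᴴ * X 0 := by
  let τ : Matrix n n ℂ →L[ℝ] Matrix n n ℂ := (starL' ℝ : Matrix n n ℂ ≃L[ℝ] Matrix n n ℂ)
  have hτ (N : Matrix n n ℂ) : τ N = Nᴴ := rfl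
  simpa [hτ] using map_mul_sub_map_mul_eq_of_hasDerivAt τ (fun a b => by simp [hτ])
    (fun t => by simp [hτ, ← transpose_map, conjTranspose_map_ofReal])
    (fun t => by simp [hτ, ← transpose_map, conjTranspose_map_ofReal])
    (fun t => by simp [hτ, conjTranspose_map_ofReal, hC])
    (fun t => by simp [hτ, conjTranspose_map_ofReal, hA]) (fun t => (h t).1) (fun t => (h t).2) t

theorem hasDerivAt_mul_ringInverse_apply (h : IsLinearizedHamiltonianFlow A B C X Y) {t : ℝ}
    (hX : IsUnit (X t)) (i j : n) :
    HasDerivAt (fun s => (Y s * (X s)⁻¹ʳ) i j)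
      ((-((A t).map Complex.ofReal + (B t).map Complex.ofReal * (Y t * (X t)⁻¹ʳ) +
        Y t * (X t)⁻¹ʳ * ((B t).map Complex.ofReal)ᵀ +
        Y t * (X t)⁻¹ʳ * (C t).map Complex.ofReal * (Y t * (X t)⁻¹ʳ))) i j) t := by
  have hM := HasDerivAt.mul_ringInverse_of_linear (h t).1 (h t).2 hX
  rw [show ∀ a b c m : Matrix n n ℂ,
      -a + -b * m - m * bᵀ - m * c * m = -(a + b * m + m * bᵀ + m * c * m) from
    fun _ _ _ _ => by noncomm_ring] at hM
  exact (entryLinearMap ℝ ℂ i j).toContinuousLinearMap.hasFDerivAt.comp_hasDerivAt t hM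

end IsLinearizedHamiltonianFlow

end LinearizedHamiltonianFlow

theorem riccati_global_solution_general
    {n : ℕ}
    (A B C : ℝ → Matrix (Fin n) (Fin n) ℝ)
    (hA : Continuous A) (hB : Continuous B) (hC : Continuous C)
    (hAsymm : ∀ t, (A t)ᵀ = A t) (hCsymm : ∀ t, (C t)ᵀ = C t)
    (M₀ : Matrix (Fin n) (Fin n) ℂ) (hM₀symm : M₀ᵀ = M₀)
    (hM₀pos : (M₀.map Complex.im).PosDef) :
    ∃ M : ℝ → Matrix (Fin n) (Fin n) ℂ,
      M 0 = M₀ ∧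
      (∀ t : ℝ, ∀ i j, HasDerivAt (fun s => M s i j)
        (-(((A t).map Complex.ofReal) + ((B t).map Complex.ofReal) * M t +
            M t * ((B t).map Complex.ofReal)ᵀ +
            M t * ((C t).map Complex.ofReal) * M t) i j) t) ∧
      (∀ t : ℝ, (M t)ᵀ = M t) ∧
      (∀ t : ℝ, ((M t).map Complex.im).PosDef) := by
  obtain ⟨X, Y, hX0, hY0, hXY⟩ := exists_isLinearizedHamiltonianFlow hA hB hC 1 M₀
  have hsymm (t : ℝ) : (X t)ᵀ * Y t = (Y t)ᵀ * X t := by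
    have := hXY.transpose_mul_sub_transpose_mul hAsymm hCsymm t
    rwa [hX0, hY0, transpose_one, one_mul, mul_one, hM₀symm, sub_self, sub_eq_zero] at this
  have hherm (t : ℝ) : (X t)ᴴ * Y t - (Y t)ᴴ * X t =
      (2 * Complex.I) • (M₀.map Complex.im).map Complex.ofReal := by
    rw [hXY.conjTranspose_mul_sub_conjTranspose_mul hAsymm hCsymm t, hX0, hY0,
      conjTranspose_one, one_mul, mul_one, sub_conjTranspose_eq_smul_map_im hM₀symm]
  have hunit (t : ℝ) : IsUnit (X t) :=
    isUnit_of_conjTranspose_mul_sub_eq_smul (mul_ne_zero two_ne_zero Complex.I_ne_zero)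
      (posDef_map_ofReal_iff.2 hM₀pos) (hherm t)
  have hMsymm (t : ℝ) : (Y t * (X t)⁻¹ʳ)ᵀ = Y t * (X t)⁻¹ʳ :=
    transpose_mul_ringInverse_of_transpose_mul_eq (hunit t) (hsymm t)
  exact ⟨fun t => Y t * (X t)⁻¹ʳ, by simp [hX0, hY0],
    fun t => hXY.hasDerivAt_mul_ringInverse_apply (hunit t), hMsymm,
    fun t => posDef_map_im_mul_ringInverse hM₀pos (hherm t) (hMsymm t)⟩

theorem riccati_global_solution
    {n : ℕ} (hn : 1 ≤ n)
    (A B C : ℝ → Matrix (Fin n) (Fin n) ℝ)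
    (hA : Continuous A) (hB : Continuous B) (hC : Continuous C)
    (hAsymm : ∀ t, (A t)ᵀ = A t) (hCsymm : ∀ t, (C t)ᵀ = C t)
    (M₀ : Matrix (Fin n) (Fin n) ℂ) (hM₀symm : M₀ᵀ = M₀)
    (hM₀pos : (M₀.map Complex.im).PosDef) :
    ∃ M : ℝ → Matrix (Fin n) (Fin n) ℂ,
      M 0 = M₀ ∧
      (∀ t : ℝ, ∀ i j, HasDerivAt (fun s => M s i j)
        (-(((A t).map Complex.ofReal) + ((B t).map Complex.ofReal) * M t +
            M t * ((B t).map Complex.ofReal)ᵀ +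
            M t * ((C t).map Complex.ofReal) * M t) i j) t) ∧
      (∀ t : ℝ, (M t)ᵀ = M t) ∧
      (∀ t : ℝ, ((M t).map Complex.im).PosDef) :=
  riccati_global_solution_general A B C hA hB hC hAsymm hCsymm M₀ hM₀symm hM₀pos
end
end
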